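/- Every finite binary string ending in 00 and followed by zeros factors uniquely as a concatenation of blocks from the set X = {0} ∪ {1^{n+1} 0 1^m 0 : n, m ≥ 0}; i.e., the map from X* to binary strings with suffix 00 (concatenation) is a bijection onto its claimed image. -/
import Mathlib


/-- The block set `X = {0} ∪ {1^(n+1) 0 1^m 0 : n, m ≥ 0}` over the alphabet `{0,1}`. -/
def isXBlock (w : List (Fin 2)) : Prop :=
  w = [0] ∨ ∃ n m : ℕ,
    w = List.replicate (n + 1) (1 : Fin 2) ++ [0] ++ List.replicate m (1 : Fin 2) ++ [0]

lemma repl_inj : ∀ (k k' : ℕ) (u u' : List (Fin 2)),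
    List.replicate k 1 ++ 0 :: u = List.replicate k' 1 ++ 0 :: u' → k = k' ∧ u = u' := by
  intro k
  induction k with
  | zero =>
    intro k' u u' h
    cases k' with
    | zero => simpa using h
    | succ j => rw [List.replicate_succ] at h; simp at h
  | succ j ih =>
    intro k' u u' h
    cases k' with
    | zero => rw [List.replicate_succ] at h; simp at h
    | succ j' =>
      rw [List.replicate_succ, List.replicate_succ] at h
      simp only [List.cons_append, List.cons.injEq] at h
      obtain ⟨hk, hu⟩ := ih j' u u' h.2
      exact ⟨by omega, hu⟩

lemma splitOnes : ∀ t : List (Fin 2),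
    ∃ k r, t = List.replicate k 1 ++ r ∧ (r = [] ∨ ∃ r', r = 0 :: r') := by
  intro t
  induction t with
  | nil => exact ⟨0, [], rfl, Or.inl rfl⟩
  | cons c t ih =>
    obtain ⟨k, r, h1, h2⟩ := ih
    fin_cases c
    · exact ⟨0, 0 :: t, rfl, Or.inr ⟨t, rfl⟩⟩
    · exact ⟨k + 1, r, by rw [List.replicate_succ]; simp [h1], h2⟩

lemma block_ne_nil {w : List (Fin 2)} (h : isXBlock w) : w ≠ [] := by
  rcases h with rfl | ⟨n, m, rfl⟩ <;> simp

lemma block_det {w1 w2 a b : List (Fin 2)} (h1 : isXBlock w1) (h2 : isXBlock w2)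
    (h : w1 ++ a = w2 ++ b) : w1 = w2 := by
  rcases h1 with rfl | ⟨n1, m1, rfl⟩ <;> rcases h2 with rfl | ⟨n2, m2, rfl⟩
  · rfl
  · rw [List.replicate_succ] at h; simp at h
  · rw [List.replicate_succ] at h; simp at h
  · simp only [List.append_assoc, List.singleton_append, List.cons_append] at h
    obtain ⟨hk, h'⟩ := repl_inj _ _ _ _ h
    obtain ⟨hm, _⟩ := repl_inj _ _ _ _ h'
    rw [hk, hm]

lemma uniq : ∀ L1 L2 : List (List (Fin 2)), (∀ w ∈ L1, isXBlock w) →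
    (∀ w ∈ L2, isXBlock w) → L1.flatten = L2.flatten → L1 = L2 := by
  intro L1
  induction L1 with
  | nil =>
    intro L2 _ h2 h
    cases L2 with
    | nil => rfl
    | cons w L2' =>
      exfalso
      have hw := block_ne_nil (h2 w (by simp))
      simp at h
      exact hw h.1
  | cons w1 L1' ih =>
    intro L2 h1 h2 h
    cases L2 with
    | nil =>
      exfalso
      have hw := block_ne_nil (h1 w1 (by simp))
      simp at h
      exact hw h.1
    | cons w2 L2' =>
      simp only [List.flatten_cons] at h
      have hb1 := h1 w1 (by simp)
      have hb2 := h2 w2 (by simp)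
      have hw : w1 = w2 := block_det hb1 hb2 h
      subst hw
      have htail : L1'.flatten = L2'.flatten := by
        have := List.append_cancel_left h
        exact this
      rw [ih L2' (fun w hw => h1 w (by simp [hw])) (fun w hw => h2 w (by simp [hw])) htail]

lemma exists_fac : ∀ n (t : List (Fin 2)), t.length = n →
    (t = [] ∨ t = [0] ∨ ∃ s, t = s ++ [0, 0]) →
    ∃ L : List (List (Fin 2)), (∀ w ∈ L, isXBlock w) ∧ L.flatten = t := by
  intro n
  induction n using Nat.strong_induction_on with
  | _ n ih =>
    intro t hlen ht
    rcases ht with rfl | rfl | ⟨s, rfl⟩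
    · exact ⟨[], by simp, rfl⟩
    · refine ⟨[[0]], ?_, rfl⟩
      intro w hw
      simp at hw
      exact hw ▸ Or.inl rfl
    · set t := s ++ [0, 0] with htdef
      have hcount : 2 ≤ t.count 0 := by
        simp [htdef, List.count_append]
      obtain ⟨k, r1, h1, h2⟩ := splitOnes t
      cases k with
      | zero =>
        -- t starts with 0 (or is empty, impossible)
        simp at h1
        rcases h2 with rfl | ⟨r2, rfl⟩
        · exact absurd h1.symm (by simp [htdef])
        · -- t = 0 :: r2
          have hr2 : r2 = [] ∨ r2 = [0] ∨ ∃ s', r2 = s' ++ [0, 0] := by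
            rw [htdef] at h1
            cases s with
            | nil =>
              simp at h1
              exact Or.inr (Or.inl h1.symm)
            | cons c u =>
              simp only [List.cons_append, List.cons.injEq] at h1
              exact Or.inr (Or.inr ⟨u, h1.2.symm⟩)
          have hr2len : r2.length < n := by
            have : t.length = r2.length + 1 := by rw [h1]; simp
            omega
          obtain ⟨L', hL1, hL2⟩ := ih r2.length hr2len r2 rfl hr2
          refine ⟨[0] :: L', ?_, by simp [hL2, h1]⟩
          intro w hw
          rcases List.mem_cons.mp hw with rfl | hw
          · exact Or.inl rfl
          · exact hL1 w hw
      | succ k0 =>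
        -- r1 = 0 :: r2
        rcases h2 with rfl | ⟨r2, rfl⟩
        · exfalso
          rw [h1] at hcount
          simp [List.count_replicate] at hcount
        obtain ⟨m, r3, h3, h4⟩ := splitOnes r2
        rcases h4 with rfl | ⟨r4, rfl⟩
        · exfalso
          rw [h1, h3] at hcount
          simp [List.count_append, List.count_replicate] at hcount
        set w : List (Fin 2) :=
          List.replicate (k0 + 1) 1 ++ [0] ++ List.replicate m 1 ++ [0] with hwdef
        have hw : isXBlock w := Or.inr ⟨k0, m, rfl⟩
        have htw : t = w ++ r4 := by
          rw [h1, h3, hwdef]; simp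
        have hr4 : r4 = [] ∨ r4 = [0] ∨ ∃ s', r4 = s' ++ [0, 0] := by
          have hsuf : [0, 0] <:+ t := ⟨s, rfl⟩
          have hsuf4 : r4 <:+ t := htw ▸ List.suffix_append w r4
          rcases le_or_gt r4.length 2 with hle | hlt
          · have hss : r4 <:+ [0, 0] := List.suffix_of_suffix_length_le hsuf4 hsuf (by simpa using hle)
            obtain ⟨p, hp⟩ := hss
            match p, hp with
            | [], hp => exact Or.inr (Or.inr ⟨[], by simp [← hp]⟩)
            | [x], hp =>
              simp only [List.cons_append, List.nil_append, List.cons.injEq] at hp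
              exact Or.inr (Or.inl hp.2)
            | (x :: y :: p), hp =>
              simp only [List.cons_append, List.cons.injEq] at hp
              exact Or.inl (List.append_eq_nil_iff.mp hp.2.2).2
          · have hss : [0, 0] <:+ r4 := List.suffix_of_suffix_length_le hsuf hsuf4 (by simp; omega)
            obtain ⟨p, hp⟩ := hss
            exact Or.inr (Or.inr ⟨p, hp.symm⟩)
        have hlt4 : r4.length < n := by
          have h5 : t.length = w.length + r4.length := by rw [htw]; simp
          have hw2 : 2 ≤ w.length := by simp [hwdef]; omega
          omega
        obtain ⟨L', hL1, hL2⟩ := ih r4.length hlt4 r4 rfl hr4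
        refine ⟨w :: L', ?_, by simp [hL2, htw]⟩
        intro v hv
        rcases List.mem_cons.mp hv with rfl | hv
        · exact hw
        · exact hL1 v hv

/-- Every finite binary string ending in `00` factors uniquely as a concatenation of
blocks from `X`; i.e. the concatenation map from `X*` is a bijection onto the set of
binary strings with suffix `00`. -/
theorem stmt_13 (s : List (Fin 2)) :
    ∃! L : List (List (Fin 2)),
      (∀ w ∈ L, isXBlock w) ∧ L.flatten = s ++ [0, 0] := by
  obtain ⟨L, hL1, hL2⟩ := exists_fac (s ++ [0, 0]).length (s ++ [0, 0]) rfl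
    (Or.inr (Or.inr ⟨s, rfl⟩))
  exact ⟨L, ⟨hL1, hL2⟩, fun L' hL' => uniq L' L hL'.1 hL1 (hL'.2.trans hL2.symm)⟩
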